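/- With N(x,ξ;t,τ) = K(x,ξ;t,τ) + K(−x,ξ;t,τ) where K(x,ξ;t,τ) = (1/(2√(π(t−τ)))) exp(−(x−ξ)²/(4(t−τ))) for τ < t, and s, s̃ continuous functions with s(t), s̃(t) ≥ b > 0 on [0,T], and h ∈ C([0,T]): |∫_0^t [N(s(t),0;t,τ) − N(s̃(t),0;t,τ)] h(τ) dτ| ≤ C ‖s − s̃‖_∞, where C depends only on b, T, ‖h‖_∞, and max(‖s‖_∞, ‖s̃‖_∞). -/

import Mathlib

/-- The heat kernel `K(x,ξ;t,τ)`. -/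
noncomputable def Kheat (x ξ t τ : ℝ) : ℝ :=
  (1 / (2 * Real.sqrt (Real.pi * (t - τ)))) * Real.exp (-(x - ξ)^2 / (4 * (t - τ)))

/-- The Neumann function `N = K(x,ξ;t,τ) + K(-x,ξ;t,τ)`. -/
noncomputable def Nheat (x ξ t τ : ℝ) : ℝ := Kheat x ξ t τ + Kheat (-x) ξ t τ

/-! For `r = t - τ`, `N(x,0;t,τ) = (π r)^{-1/2} e^{-x²/(4r)}`, and
`|e^{-a} - e^{-b}| ≤ e^{-min(a,b)} |a - b|` with `a, b ≥ b₀²/(4r)` together with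
`e^{-v} ≤ 2/v²` give `|N(x) - N(y)| ≤ 8 √r (x + y) |x - y| / (b₀⁴ √π)`.
The factor `e^{-b₀²/(4r)}` thus kills the singularity `r^{-3/2}`, the integrand is bounded by a
constant times `|x - y|`, and `x = s(t)`, `y = s̃(t)` gives the claim. -/

open Real

lemma abs_exp_neg_sub_exp_neg_le {c A B : ℝ} (hA : c ≤ A) (hB : c ≤ B) :
    |exp (-A) - exp (-B)| ≤ exp (-c) * |A - B| := by
  wlog hAB : A ≤ B generalizing A B
  · rw [abs_sub_comm, abs_sub_comm A]
    exact this hB hA (le_of_not_ge hAB)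
  rw [abs_of_nonneg (sub_nonneg.2 (exp_le_exp.2 (neg_le_neg hAB))), abs_of_nonpos (by linarith),
    neg_sub]
  calc exp (-A) - exp (-B) = exp (-A) * (1 - exp (-(B - A))) := by
        rw [mul_sub, ← exp_add]; ring_nf
    _ ≤ exp (-c) * (B - A) :=
        mul_le_mul (exp_le_exp.2 (neg_le_neg hA)) (by linarith [add_one_le_exp (-(B - A))])
          (sub_nonneg.2 (exp_le_one_iff.2 (by linarith))) (exp_pos _).le

lemma exp_neg_le_two_div_sq {v : ℝ} (hv : 0 < v) : exp (-v) ≤ 2 / v ^ 2 := by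
  have hsq : v ^ 2 / 2 ≤ exp v := by
    simpa using pow_div_factorial_le_exp _ hv.le 2
  rw [exp_neg, ← inv_div]
  exact inv_anti₀ (by positivity) hsq

lemma Nheat_zero_eq (x t τ : ℝ) :
    Nheat x 0 t τ = (sqrt (π * (t - τ)))⁻¹ * exp (-(x ^ 2 / (4 * (t - τ)))) := by
  simp only [Nheat, Kheat, sub_zero, neg_sq, neg_div]
  ring

lemma abs_Nheat_sub_Nheat_le {b x y t τ : ℝ} (hb : 0 < b) (hx : b ≤ x) (hy : b ≤ y)
    (hτt : τ ≤ t) :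
    |Nheat x 0 t τ - Nheat y 0 t τ| ≤
      8 * sqrt (t - τ) * (x + y) / (b ^ 4 * sqrt π) * |x - y| := by
  rcases hτt.eq_or_lt with rfl | hτt
  -- at `τ = t` both sides vanish, the kernel's prefactor being the junk value `(√0)⁻¹ = 0`
  · simp [Nheat_zero_eq]
  have hxy : 0 < x + y := by linarith
  set r := t - τ
  have hr : 0 < r := sub_pos.2 hτt
  have hexp : exp (-(b ^ 2 / (4 * r))) ≤ 32 * r ^ 2 / b ^ 4 := by
    convert exp_neg_le_two_div_sq (show 0 < b ^ 2 / (4 * r) by positivity) using 1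
    field_simp
    ring
  have hdiff : |exp (-(x ^ 2 / (4 * r))) - exp (-(y ^ 2 / (4 * r)))| ≤
      32 * r ^ 2 / b ^ 4 * ((x + y) * |x - y| / (4 * r)) := by
    calc _ ≤ exp (-(b ^ 2 / (4 * r))) * |x ^ 2 / (4 * r) - y ^ 2 / (4 * r)| :=
          abs_exp_neg_sub_exp_neg_le (by gcongr) (by gcongr)
      _ = exp (-(b ^ 2 / (4 * r))) * ((x + y) * |x - y| / (4 * r)) := by
          rw [← sub_div, abs_div, abs_of_pos (by positivity : 0 < 4 * r),
            show x ^ 2 - y ^ 2 = (x + y) * (x - y) by ring, abs_mul,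
            abs_of_pos hxy]
      _ ≤ _ := by gcongr
  have hsqrt : sqrt r ^ 2 = r := sq_sqrt hr.le
  rw [Nheat_zero_eq, Nheat_zero_eq, ← mul_sub, abs_mul, abs_of_pos (by positivity),
    sqrt_mul pi_pos.le]
  calc _ ≤ (sqrt π * sqrt r)⁻¹ * (32 * r ^ 2 / b ^ 4 * ((x + y) * |x - y| / (4 * r))) := by
        gcongr
    _ = _ := by
        field_simp
        rw [hsqrt]
        ring

lemma abs_integral_Nheat_sub_mul_le {b x y t Hb : ℝ} {h : ℝ → ℝ} (hb : 0 < b) (hx : b ≤ x)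
    (hy : b ≤ y) (ht : 0 ≤ t) (hh : ∀ τ ∈ Set.Ioc 0 t, |h τ| ≤ Hb) :
    |∫ τ in (0:ℝ)..t, (Nheat x 0 t τ - Nheat y 0 t τ) * h τ| ≤
      8 * sqrt t * (x + y) / (b ^ 4 * sqrt π) * |x - y| * Hb * t := by
  have hxy : 0 < x + y := by linarith
  have hpointwise : ∀ τ ∈ Set.uIoc 0 t, ‖(Nheat x 0 t τ - Nheat y 0 t τ) * h τ‖ ≤
      8 * sqrt t * (x + y) / (b ^ 4 * sqrt π) * |x - y| * Hb := by
    intro τ hτ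
    rw [Set.uIoc_of_le ht] at hτ
    rw [norm_mul, Real.norm_eq_abs, Real.norm_eq_abs]
    have hHb : 0 ≤ Hb := (abs_nonneg _).trans (hh τ hτ)
    calc _ ≤ 8 * sqrt (t - τ) * (x + y) / (b ^ 4 * sqrt π) * |x - y| * Hb :=
          mul_le_mul (abs_Nheat_sub_Nheat_le hb hx hy hτ.2) (hh τ hτ) (abs_nonneg _)
            (by positivity)
      _ ≤ _ := by gcongr; linarith [hτ.1]
  simpa [abs_of_nonneg ht] using intervalIntegral.norm_integral_le_of_norm_le_const hpointwise

theorem stmt_10 (b T Hb S : ℝ) (hb : 0 < b) (hT : 0 < T) (hHb : 0 < Hb) (hS : b ≤ S) :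
    ∃ C > 0, ∀ s st h : ℝ → ℝ,
      ContinuousOn s (Set.Icc 0 T) → ContinuousOn st (Set.Icc 0 T) →
      ContinuousOn h (Set.Icc 0 T) →
      (∀ t ∈ Set.Icc (0:ℝ) T, b ≤ s t ∧ s t ≤ S) →
      (∀ t ∈ Set.Icc (0:ℝ) T, b ≤ st t ∧ st t ≤ S) →
      (∀ t ∈ Set.Icc (0:ℝ) T, |h t| ≤ Hb) →
      ∀ t ∈ Set.Icc (0:ℝ) T,
        |∫ τ in (0:ℝ)..t, (Nheat (s t) 0 t τ - Nheat (st t) 0 t τ) * h τ| ≤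
          C * sSup ((fun r => |s r - st r|) '' Set.Icc 0 T) := by
  have hS0 : 0 < S := hb.trans_le hS
  refine ⟨16 * sqrt T * S / (b ^ 4 * sqrt π) * Hb * T, by positivity, ?_⟩
  intro s st h _ _ _ hs hst hh t ht
  set M := sSup ((fun r => |s r - st r|) '' Set.Icc 0 T)
  have hbdd : BddAbove ((fun r => |s r - st r|) '' Set.Icc 0 T) := by
    refine ⟨S - b, ?_⟩
    rintro _ ⟨r, hr, rfl⟩
    exact abs_sub_le_iff.2 ⟨by linarith [hs r hr, hst r hr], by linarith [hs r hr, hst r hr]⟩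
  have hM : |s t - st t| ≤ M := le_csSup hbdd ⟨t, ht, rfl⟩
  have hM0 : 0 ≤ M := (abs_nonneg _).trans hM
  have hsum0 : 0 ≤ s t + st t := by linarith [(hs t ht).1, (hst t ht).1]
  have hsum : s t + st t ≤ 2 * S := by linarith [hs t ht, hst t ht]
  calc _ ≤ 8 * sqrt t * (s t + st t) / (b ^ 4 * sqrt π) * |s t - st t| * Hb * t :=
        abs_integral_Nheat_sub_mul_le hb (hs t ht).1 (hst t ht).1 ht.1
          fun τ hτ => hh τ ⟨hτ.1.le, hτ.2.trans ht.2⟩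
    _ ≤ 8 * sqrt T * (2 * S) / (b ^ 4 * sqrt π) * M * Hb * T := by
        gcongr
        exacts [ht.1, ht.2, ht.2]
    _ = 16 * sqrt T * S / (b ^ 4 * sqrt π) * Hb * T * M := by ring
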